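/- Let λ = −s/2, ν = −t/2 with s, t ∈ {0,…,k}, s + t ≥ k, and μ = λ + ν + k + 1. Then the constants β_i = C(k+1,i)·C(k−t,i)/C(s,i) for 0 ≤ i ≤ s (and zero otherwise) satisfy, for 0 ≤ i ≤ k with i ≠ s, the relation (i+1)(i−s)β_{i+1} + (k+1−i)(k−i−t)β_i = 0, so the 1-cochain 𝔠(X_h,f,g) = Σ_{i=0}^{s} β_i h' f^{(i)} g^{(k+1−i)} is a 1-cocycle of sl(2) with values in D_{λ,ν;μ} up to adding a multiple of the 1-cocycle 𝔟(X_h,f,g) = h''f^{(k−t)}g^{(t)}. -/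

import Mathlib

open Finset ContDiff


/-- `L^μ_h(f) = hf' + μh'f`. -/
noncomputable def Lop (mu : ℝ) (h f : ℝ → ℝ) : ℝ → ℝ :=
  fun x => h x * deriv f x + mu * deriv h x * f x

/-- The 1-cochain `𝔠(X_h,f,g) = Σ_{i=0}^{s} β_i h' f^{(i)} g^{(k+1−i)}`. -/
noncomputable def ccochain (k s : ℕ) (β : ℕ → ℝ) (h f g : ℝ → ℝ) : ℝ → ℝ :=
  fun x => ∑ i ∈ Finset.range (s + 1), β i * deriv h x * deriv^[i] f x * deriv^[k + 1 - i] g x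

/-- The 1-cocycle `𝔟(X_h,f,g) = h'' f^{(k−t)} g^{(t)}`. -/
noncomputable def bcochain (k t : ℕ) (h f g : ℝ → ℝ) : ℝ → ℝ :=
  fun x => deriv (deriv h) x * deriv^[k - t] f x * deriv^[t] g x


lemma hda {f : ℝ → ℝ} (hf : ContDiff ℝ ∞ f) (n : ℕ) (x : ℝ) :
    HasDerivAt (deriv^[n] f) (deriv^[n+1] f x) x := by
  have h1 : Differentiable ℝ (deriv^[n] f) :=
    (hf.iterate_deriv n).differentiable (by simp)
  have := (h1 x).hasDerivAt
  rwa [Function.iterate_succ_apply' deriv n f]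

/-- iterated derivative of `x f' + c f` -/
lemma itd1 {f : ℝ → ℝ} (hf : ContDiff ℝ ∞ f) (c : ℝ) :
    ∀ n : ℕ, deriv^[n] (fun y => y * deriv f y + c * f y)
      = fun x => x * deriv^[n+1] f x + ((n : ℝ) + c) * deriv^[n] f x := by
  intro n
  induction n with
  | zero => funext x; simp
  | succ n ih =>
    rw [Function.iterate_succ_apply' deriv, ih]
    funext x
    have h1 := ((hasDerivAt_id' (x := x)).fun_mul (hda hf (n+1) x)).fun_add
      ((hda hf n x).const_mul ((n : ℝ) + c))
    rw [h1.deriv]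
    push_cast
    ring

/-- iterated derivative of `x² f' + c x f`, successor version -/
lemma itd2 {f : ℝ → ℝ} (hf : ContDiff ℝ ∞ f) (c : ℝ) :
    ∀ n : ℕ, deriv^[n+1] (fun y => y^2 * deriv f y + c * y * f y)
      = fun x => x^2 * deriv^[n+2] f x + (2*(n : ℝ) + 2 + c) * x * deriv^[n+1] f x
          + ((n : ℝ) + 1) * ((n : ℝ) + c) * deriv^[n] f x := by
  intro n
  induction n with
  | zero =>
    rw [Function.iterate_succ_apply' deriv, Function.iterate_zero_apply]
    funext x
    have h1 := ((hasDerivAt_pow 2 x).fun_mul (hda hf 1 x)).fun_add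
      (((hasDerivAt_id' (x := x)).const_mul c).fun_mul (hda hf 0 x))
    have h2 : HasDerivAt (fun y => y^2 * deriv f y + c * y * f y)
        ((2:ℝ) * x ^ 1 * deriv^[1] f x + x ^ 2 * deriv^[2] f x +
          (c * 1 * deriv^[0] f x + c * x * deriv^[1] f x)) x := by
      simpa using h1
    rw [h2.deriv]
    simp
    ring
  | succ n ih =>
    rw [Function.iterate_succ_apply' deriv, ih]
    funext x
    have h1 := (((hasDerivAt_pow 2 x).fun_mul (hda hf (n+2) x)).fun_add
      (((hasDerivAt_id' (x := x)).const_mul (2*(n:ℝ)+2+c)).fun_mul (hda hf (n+1) x))).fun_add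
      ((hda hf n x).const_mul (((n:ℝ)+1) * ((n:ℝ)+c)))
    have h2 : HasDerivAt (fun y => y^2 * deriv^[n+2] f y + (2*(n:ℝ)+2+c) * y * deriv^[n+1] f y
        + ((n:ℝ)+1) * ((n:ℝ)+c) * deriv^[n] f y)
        (((2:ℝ) * x ^ 1 * deriv^[n+2] f x + x ^ 2 * deriv^[n+3] f x +
          ((2*(n:ℝ)+2+c) * 1 * deriv^[n+1] f x + (2*(n:ℝ)+2+c) * x * deriv^[n+2] f x)) +
          ((n:ℝ)+1) * ((n:ℝ)+c) * deriv^[n+1] f x) x := by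
      simpa using h1
    rw [h2.deriv]
    push_cast
    ring

lemma Lop_one (m : ℝ) (A : ℝ → ℝ) : Lop m (fun _ => 1) A = deriv A := by
  funext y; simp [Lop]

lemma Lop_id (m : ℝ) (A : ℝ → ℝ) : Lop m (fun x => x) A = fun x => x * deriv A x + m * A x := by
  funext y; simp [Lop]

lemma Lop_sq (m : ℝ) (A : ℝ → ℝ) :
    Lop m (fun x => x ^ 2) A = fun x => x ^ 2 * deriv A x + (2 * m) * x * A x := by
  funext y; simp only [Lop, deriv_pow_field]; push_cast; ring

lemma cc_const (k s : ℕ) (β : ℕ → ℝ) (c : ℝ) (f g : ℝ → ℝ) :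
    ccochain k s β (fun _ => c) f g = fun _ => 0 := by
  funext y; simp [ccochain]

lemma cc_id (k s : ℕ) (β : ℕ → ℝ) (f g : ℝ → ℝ) :
    ccochain k s β (fun x => x) f g
      = fun x => ∑ i ∈ Finset.range (s + 1), β i * deriv^[i] f x * deriv^[k + 1 - i] g x := by
  funext y; simp [ccochain]

lemma cc_sq (k s : ℕ) (β : ℕ → ℝ) (f g : ℝ → ℝ) :
    ccochain k s β (fun x => x ^ 2) f g
      = fun x => ∑ i ∈ Finset.range (s + 1),
          β i * (2 * x) * deriv^[i] f x * deriv^[k + 1 - i] g x := by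
  funext y; simp [ccochain, mul_comm]

/-- general-n version with nat subtraction -/
lemma itd2' {f : ℝ → ℝ} (hf : ContDiff ℝ ∞ f) (c : ℝ) (n : ℕ) :
    deriv^[n] (fun y => y^2 * deriv f y + c * y * f y)
      = fun x => x^2 * deriv^[n+1] f x + (2*(n : ℝ) + c) * x * deriv^[n] f x
          + (n : ℝ) * ((n : ℝ) - 1 + c) * deriv^[n-1] f x := by
  match n with
  | 0 => funext x; simp
  | (m+1) =>
    rw [itd2 hf c m]
    funext x
    push_cast
    ring_nf

lemma hda_sum_id {f g : ℝ → ℝ} (hf : ContDiff ℝ ∞ f) (hg : ContDiff ℝ ∞ g)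
    (β : ℕ → ℝ) (k s : ℕ) (x : ℝ) :
    HasDerivAt (fun y => ∑ i ∈ Finset.range (s+1), β i * deriv^[i] f y * deriv^[k+1-i] g y)
      (∑ i ∈ Finset.range (s+1), β i * (deriv^[i+1] f x * deriv^[k+1-i] g x
        + deriv^[i] f x * deriv^[k+1-i+1] g x)) x := by
  apply HasDerivAt.fun_sum
  intro i _
  have := ((hda hf i x).fun_mul (hda hg (k+1-i) x)).const_mul (β i)
  simpa [mul_assoc] using this

lemma hda_sum_sq {f g : ℝ → ℝ} (hf : ContDiff ℝ ∞ f) (hg : ContDiff ℝ ∞ g)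
    (β : ℕ → ℝ) (k s : ℕ) (x : ℝ) :
    HasDerivAt (fun y => ∑ i ∈ Finset.range (s+1), β i * (2*y) * deriv^[i] f y * deriv^[k+1-i] g y)
      (∑ i ∈ Finset.range (s+1), β i * ((2 * deriv^[i] f x + 2*x * deriv^[i+1] f x) * deriv^[k+1-i] g x
        + (2*x) * deriv^[i] f x * deriv^[k+1-i+1] g x)) x := by
  apply HasDerivAt.fun_sum
  intro i _
  have h2y : HasDerivAt (fun y : ℝ => 2*y) 2 x := by
    simpa using (hasDerivAt_id' (x := x)).const_mul (2:ℝ)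
  have := ((h2y.mul (hda hf i x)).fun_mul (hda hg (k+1-i) x)).const_mul (β i)
  simpa [mul_assoc, mul_add] using this


/-- real-cast version of the choose recurrence, valid for all n i -/
lemma chooseR (n i : ℕ) (hin : i ≤ n) :
    (Nat.choose n (i+1) : ℝ) * ((i : ℝ) + 1) = (Nat.choose n i : ℝ) * ((n : ℝ) - i) := by
  have h := Nat.choose_succ_right_eq n i
  have h2 : ((Nat.choose n (i+1) * (i+1) : ℕ) : ℝ) = ((Nat.choose n i * (n - i) : ℕ) : ℝ) :=
    congrArg Nat.cast h
  push_cast [Nat.cast_sub hin] at h2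
  linarith

lemma chooseR' (n i : ℕ) :
    (Nat.choose n (i+1) : ℝ) * ((i : ℝ) + 1) = (Nat.choose n i : ℝ) * ((n : ℝ) - i) := by
  rcases le_or_gt i n with h | h
  · exact chooseR n i h
  · rw [Nat.choose_eq_zero_of_lt (by omega), Nat.choose_eq_zero_of_lt h]
    simp

lemma recursion (k s t : ℕ) (hs : s ≤ k)
    (β : ℕ → ℝ)
    (hβ : ∀ i : ℕ, β i =
      if i ≤ s then
        (Nat.choose (k + 1) i : ℝ) * (Nat.choose (k - t) i : ℝ) / (Nat.choose s i : ℝ)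
      else 0) (ht : t ≤ k) :
    ∀ i : ℕ, i ≤ k → i ≠ s →
      ((i : ℝ) + 1) * ((i : ℝ) - (s : ℝ)) * β (i + 1)
        + ((k : ℝ) + 1 - (i : ℝ)) * ((k : ℝ) - (i : ℝ) - (t : ℝ)) * β i = 0 := by
  intro i hik his
  by_cases h : i ≤ s
  · have hilt : i < s := lt_of_le_of_ne h his
    rw [hβ i, hβ (i+1), if_pos h, if_pos (by omega : i + 1 ≤ s)]
    have hi1 : ((i : ℝ) + 1) ≠ 0 := by positivity
    have c1 : ((k+1).choose (i+1) : ℝ) = ((k+1).choose i : ℝ) * ((k:ℝ) + 1 - i) / ((i:ℝ)+1) := by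
      rw [eq_div_iff hi1]
      have := chooseR' (k+1) i
      push_cast at this ⊢
      linarith
    have c2 : ((k-t).choose (i+1) : ℝ) = ((k-t).choose i : ℝ) * ((k:ℝ) - t - i) / ((i:ℝ)+1) := by
      rw [eq_div_iff hi1]
      have := chooseR' (k-t) i
      rw [Nat.cast_sub ht] at this
      linarith
    have c3 : (s.choose (i+1) : ℝ) = (s.choose i : ℝ) * ((s:ℝ) - i) / ((i:ℝ)+1) := by
      rw [eq_div_iff hi1]
      exact chooseR' s i
    rw [c1, c2, c3]
    have hC : (s.choose i : ℝ) ≠ 0 := by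
      exact_mod_cast (Nat.choose_pos h).ne'
    have hsi : ((s:ℝ) - i) ≠ 0 := by
      have : (i:ℝ) < (s:ℝ) := by exact_mod_cast hilt
      linarith
    field_simp
    ring
  · rw [hβ i, hβ (i+1), if_neg h, if_neg (by omega)]
    simp

lemma boundary (k s t : ℕ) (hs : s ≤ k) (ht : t ≤ k) (hst : k ≤ s + t)
    (β : ℕ → ℝ)
    (hβ : ∀ i : ℕ, β i =
      if i ≤ s then
        (Nat.choose (k + 1) i : ℝ) * (Nat.choose (k - t) i : ℝ) / (Nat.choose s i : ℝ)
      else 0) :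
    β s * ((k : ℝ) - s - t) = 0 := by
  rcases eq_or_lt_of_le hst with h | h
  · have : (k : ℝ) = (s : ℝ) + t := by exact_mod_cast h
    rw [this]; ring
  · have : k - t < s := by omega
    rw [hβ s, if_pos le_rfl, Nat.choose_eq_zero_of_lt this]
    simp

lemma sumzero (k s t : ℕ) (hs : s ≤ k) (ht : t ≤ k) (hst : k ≤ s + t)
    (β : ℕ → ℝ)
    (hβ : ∀ i : ℕ, β i =
      if i ≤ s then
        (Nat.choose (k + 1) i : ℝ) * (Nat.choose (k - t) i : ℝ) / (Nat.choose s i : ℝ)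
      else 0)
    (f g : ℝ → ℝ) (x : ℝ) :
    ∑ i ∈ Finset.range (s+1), (β i * ((i:ℝ) * ((i:ℝ) - 1 - (s:ℝ))) * deriv^[i-1] f x * deriv^[k+1-i] g x
      + β i * (((k:ℝ) + 1 - i) * ((k:ℝ) - i - t)) * deriv^[i] f x * deriv^[k-i] g x) = 0 := by
  rw [Finset.sum_add_distrib]
  rw [Finset.sum_range_succ'
    (fun i => β i * ((i:ℝ) * ((i:ℝ) - 1 - (s:ℝ))) * deriv^[i-1] f x * deriv^[k+1-i] g x)]
  rw [Finset.sum_range_succ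
    (fun i => β i * (((k:ℝ) + 1 - i) * ((k:ℝ) - i - t)) * deriv^[i] f x * deriv^[k-i] g x)]
  have hb : β s * (((k:ℝ) + 1 - s) * ((k:ℝ) - s - t)) * deriv^[s] f x * deriv^[k-s] g x = 0 := by
    have h2 : β s * ((k:ℝ) - s - t) = 0 := boundary k s t hs ht hst β hβ
    calc β s * (((k:ℝ) + 1 - s) * ((k:ℝ) - s - t)) * deriv^[s] f x * deriv^[k-s] g x
        = (β s * ((k:ℝ) - s - t)) * (((k:ℝ) + 1 - s) * deriv^[s] f x * deriv^[k-s] g x) := by ring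
      _ = 0 := by rw [h2]; ring
  rw [hb]
  simp only [Nat.cast_zero, Nat.cast_succ]
  have : ∑ i ∈ Finset.range s,
      β (i+1) * (((i:ℝ)+1) * ((i:ℝ) + 1 - 1 - (s:ℝ))) * deriv^[(i+1)-1] f x * deriv^[k+1-(i+1)] g x =
      ∑ i ∈ Finset.range s, -(β i * (((k:ℝ) + 1 - i) * ((k:ℝ) - i - t)) * deriv^[i] f x * deriv^[k-i] g x) := by
    apply Finset.sum_congr rfl
    intro i hi
    have hi' : i < s := Finset.mem_range.mp hi
    have e1 : (i+1) - 1 = i := by omega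
    have e2 : k+1-(i+1) = k - i := by omega
    rw [e1, e2]
    have hr := recursion k s t hs β hβ ht i (by omega) (by omega)
    linear_combination (deriv^[i] f x * deriv^[k-i] g x) * hr
  rw [this, Finset.sum_neg_distrib]
  ring

section E
variable (k s : ℕ) (β : ℕ → ℝ) (f g : ℝ → ℝ) (mu lam nu : ℝ) (x : ℝ)

lemma E_any_one (h A B : ℝ → ℝ) :
    Lop mu h (ccochain k s β (fun _ => 1) f g) x
      - ccochain k s β (fun _ => 1) A g x
      - ccochain k s β (fun _ => 1) f B x = 0 := by
  simp [cc_const, Lop, deriv_const]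

lemma E_one_id (hf : ContDiff ℝ ∞ f) (hg : ContDiff ℝ ∞ g) :
    Lop mu (fun _ => 1) (ccochain k s β (fun x => x) f g) x
      - ccochain k s β (fun x => x) (Lop lam (fun _ => 1) f) g x
      - ccochain k s β (fun x => x) f (Lop nu (fun _ => 1) g) x = 0 := by
  simp only [Lop_one, cc_id]
  rw [(hda_sum_id hf hg β k s x).deriv]
  simp only [← Function.iterate_succ_apply]
  simp only [← Finset.sum_sub_distrib]
  apply Finset.sum_eq_zero
  intro i _
  ring

lemma E_one_sq (hf : ContDiff ℝ ∞ f) (hg : ContDiff ℝ ∞ g) :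
    Lop mu (fun _ => 1) (ccochain k s β (fun x => x ^ 2) f g) x
      - ccochain k s β (fun x => x ^ 2) (Lop lam (fun _ => 1) f) g x
      - ccochain k s β (fun x => x ^ 2) f (Lop nu (fun _ => 1) g) x
    = ∑ i ∈ Finset.range (s + 1), β i * 2 * deriv^[i] f x * deriv^[k + 1 - i] g x := by
  simp only [Lop_one, cc_sq]
  rw [(hda_sum_sq hf hg β k s x).deriv]
  simp only [← Function.iterate_succ_apply]
  rw [← sub_eq_zero]
  simp only [← Finset.sum_sub_distrib]
  apply Finset.sum_eq_zero
  intro i _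
  ring
end E

section E2
variable (k s t : ℕ) (β : ℕ → ℝ) (f g : ℝ → ℝ)

lemma E_id_sq (hf : ContDiff ℝ ∞ f) (hg : ContDiff ℝ ∞ g) (lam nu mu : ℝ)
    (hmu : mu = lam + nu + (k : ℝ) + 1) (hs : s ≤ k) (x : ℝ) :
    Lop mu (fun x => x) (ccochain k s β (fun x => x ^ 2) f g) x
      - ccochain k s β (fun x => x ^ 2) (Lop lam (fun x => x) f) g x
      - ccochain k s β (fun x => x ^ 2) f (Lop nu (fun x => x) g) x
    = ∑ i ∈ Finset.range (s + 1), β i * (2 * x) * deriv^[i] f x * deriv^[k + 1 - i] g x := by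
  subst hmu
  simp only [cc_sq, Lop_id]
  rw [(hda_sum_sq hf hg β k s x).deriv]
  simp only [itd1 hf lam, itd1 hg nu]
  rw [← sub_eq_zero]
  simp only [Finset.mul_sum, ← Finset.sum_add_distrib, ← Finset.sum_sub_distrib]
  apply Finset.sum_eq_zero
  intro i hi
  have his : i ≤ s := by have := Finset.mem_range.mp hi; omega
  have hik : i ≤ k := le_trans his hs
  have e2 : ((k+1-i : ℕ) : ℝ) = (k : ℝ) + 1 - i := by
    rw [Nat.cast_sub (by omega : i ≤ k + 1)]; push_cast; ring
  rw [e2]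
  ring

lemma E_sq_id (hf : ContDiff ℝ ∞ f) (hg : ContDiff ℝ ∞ g) (lam nu mu : ℝ)
    (hlam : lam = -(s : ℝ) / 2) (hnu : nu = -(t : ℝ) / 2)
    (hmu : mu = lam + nu + (k : ℝ) + 1)
    (hs : s ≤ k) (ht : t ≤ k) (hst : k ≤ s + t)
    (hβ : ∀ i : ℕ, β i =
      if i ≤ s then
        (Nat.choose (k + 1) i : ℝ) * (Nat.choose (k - t) i : ℝ) / (Nat.choose s i : ℝ)
      else 0) (x : ℝ) :
    Lop mu (fun x => x ^ 2) (ccochain k s β (fun x => x) f g) x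
      - ccochain k s β (fun x => x) (Lop lam (fun x => x ^ 2) f) g x
      - ccochain k s β (fun x => x) f (Lop nu (fun x => x ^ 2) g) x = 0 := by
  subst hmu hlam hnu
  simp only [cc_id, Lop_sq]
  rw [(hda_sum_id hf hg β k s x).deriv]
  simp only [itd2' hf (2 * (-(s:ℝ)/2)), itd2' hg (2 * (-(t:ℝ)/2))]
  have key := sumzero k s t hs ht hst β hβ f g x
  have key2 : ∑ i ∈ Finset.range (s+1),
      (-(β i * ((i:ℝ) * ((i:ℝ) - 1 - (s:ℝ))) * deriv^[i-1] f x * deriv^[k+1-i] g x)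
        - β i * (((k:ℝ) + 1 - i) * ((k:ℝ) - i - t)) * deriv^[i] f x * deriv^[k-i] g x) = 0 := by
    have hneg : ∑ i ∈ Finset.range (s+1),
        (-(β i * ((i:ℝ) * ((i:ℝ) - 1 - (s:ℝ))) * deriv^[i-1] f x * deriv^[k+1-i] g x)
          - β i * (((k:ℝ) + 1 - i) * ((k:ℝ) - i - t)) * deriv^[i] f x * deriv^[k-i] g x)
        = - ∑ i ∈ Finset.range (s+1),
        (β i * ((i:ℝ) * ((i:ℝ) - 1 - (s:ℝ))) * deriv^[i-1] f x * deriv^[k+1-i] g x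
          + β i * (((k:ℝ) + 1 - i) * ((k:ℝ) - i - t)) * deriv^[i] f x * deriv^[k-i] g x) := by
      rw [← Finset.sum_neg_distrib]
      apply Finset.sum_congr rfl
      intro i _
      ring
    rw [hneg, key, neg_zero]
  rw [← key2]
  simp only [Finset.mul_sum, ← Finset.sum_add_distrib, ← Finset.sum_sub_distrib]
  apply Finset.sum_congr rfl
  intro i hi
  have his : i ≤ s := by have := Finset.mem_range.mp hi; omega
  have hik : i ≤ k := le_trans his hs
  have e1 : (k + 1 - i) - 1 = k - i := by omega
  have e2 : ((k+1-i : ℕ) : ℝ) = (k : ℝ) + 1 - i := by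
    rw [Nat.cast_sub (by omega : i ≤ k + 1)]; push_cast; ring
  rw [e1, e2]
  ring
end E2


lemma cc_linear (k s : ℕ) (β : ℕ → ℝ) (c : ℝ) (f g : ℝ → ℝ) :
    ccochain k s β (fun y => c * y) f g
      = fun x => ∑ i ∈ Finset.range (s + 1), β i * c * deriv^[i] f x * deriv^[k + 1 - i] g x := by
  have hd : ∀ x : ℝ, deriv (fun y : ℝ => c * y) x = c := fun x => by
    simpa using ((hasDerivAt_id' (x := x)).const_mul c).deriv
  funext y; simp [ccochain, hd]

lemma cc_csq (k s : ℕ) (β : ℕ → ℝ) (c : ℝ) (f g : ℝ → ℝ) :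
    ccochain k s β (fun y => c * y ^ 2) f g
      = fun x => ∑ i ∈ Finset.range (s + 1),
          β i * (c * (2 * x)) * deriv^[i] f x * deriv^[k + 1 - i] g x := by
  have hd : ∀ x : ℝ, deriv (fun y : ℝ => c * y ^ 2) x = c * (2 * x) := fun x => by
    have := ((hasDerivAt_pow 2 x).const_mul c).deriv
    rw [this]; push_cast; ring
  funext y; simp [ccochain, hd]


/-- Let `λ = −s/2`, `ν = −t/2` with `s, t ∈ {0,…,k}`, `s + t ≥ k`, `μ = λ+ν+k+1`.
The constants `β_i = C(k+1,i)·C(k−t,i)/C(s,i)` for `0 ≤ i ≤ s` (zero otherwise)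
satisfy `(i+1)(i−s)β_{i+1} + (k+1−i)(k−i−t)β_i = 0` for all `0 ≤ i ≤ k` with
`i ≠ s`; consequently the 1-cochain `𝔠(X_h,f,g) = Σ_{i=0}^{s} β_i h' f^{(i)} g^{(k+1−i)}`
is a 1-cocycle of `sl(2)` with values in `D_{λ,ν;μ}` up to adding a multiple of the
1-cocycle `𝔟(X_h,f,g) = h'' f^{(k−t)} g^{(t)}`. -/
theorem stmt_12 (k s t : ℕ) (hs : s ≤ k) (ht : t ≤ k) (hst : k ≤ s + t)
    (lam nu mu : ℝ) (hlam : lam = -(s : ℝ) / 2) (hnu : nu = -(t : ℝ) / 2)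
    (hmu : mu = lam + nu + (k : ℝ) + 1)
    (β : ℕ → ℝ)
    (hβ : ∀ i : ℕ, β i =
      if i ≤ s then
        (Nat.choose (k + 1) i : ℝ) * (Nat.choose (k - t) i : ℝ) / (Nat.choose s i : ℝ)
      else 0) :
    (∀ i : ℕ, i ≤ k → i ≠ s →
      ((i : ℝ) + 1) * ((i : ℝ) - (s : ℝ)) * β (i + 1)
        + ((k : ℝ) + 1 - (i : ℝ)) * ((k : ℝ) - (i : ℝ) - (t : ℝ)) * β i = 0) ∧
    (∃ r : ℝ,
      ∀ h₁ ∈ ({fun _ => 1, fun x => x, fun x => x ^ 2} : Set (ℝ → ℝ)),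
      ∀ h₂ ∈ ({fun _ => 1, fun x => x, fun x => x ^ 2} : Set (ℝ → ℝ)),
      ∀ f g : ℝ → ℝ, ContDiff ℝ (⊤ : ℕ∞) f → ContDiff ℝ (⊤ : ℕ∞) g → ∀ x : ℝ,
        (ccochain k s β (fun y => h₁ y * deriv h₂ y - deriv h₁ y * h₂ y) f g x
            + r * bcochain k t (fun y => h₁ y * deriv h₂ y - deriv h₁ y * h₂ y) f g x) =
          (Lop mu h₁ (fun y => ccochain k s β h₂ f g y + r * bcochain k t h₂ f g y) x
            - (ccochain k s β h₂ (Lop lam h₁ f) g x + r * bcochain k t h₂ (Lop lam h₁ f) g x)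
            - (ccochain k s β h₂ f (Lop nu h₁ g) x + r * bcochain k t h₂ f (Lop nu h₁ g) x))
          - (Lop mu h₂ (fun y => ccochain k s β h₁ f g y + r * bcochain k t h₁ f g y) x
            - (ccochain k s β h₁ (Lop lam h₂ f) g x + r * bcochain k t h₁ (Lop lam h₂ f) g x)
            - (ccochain k s β h₁ f (Lop nu h₂ g) x + r * bcochain k t h₁ f (Lop nu h₂ g) x))) := by
  refine ⟨recursion k s t hs β hβ ht, 0, ?_⟩
  intro h₁ hh₁ h₂ hh₂ f g hf hg x
  have hf' : ContDiff ℝ ∞ f := hf.of_le (by simp)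
  have hg' : ContDiff ℝ ∞ g := hg.of_le (by simp)
  simp only [zero_mul, add_zero]
  rw [show (fun y => ccochain k s β h₂ f g y) = ccochain k s β h₂ f g from rfl,
      show (fun y => ccochain k s β h₁ f g y) = ccochain k s β h₁ f g from rfl]
  simp only [Set.mem_insert_iff, Set.mem_singleton_iff] at hh₁ hh₂
  rcases hh₁ with rfl | rfl | rfl <;> rcases hh₂ with rfl | rfl | rfl <;> beta_reduce
  -- (one, one)
  · rw [sub_self]
    have hW : (fun y : ℝ => 1 * deriv (fun _ : ℝ => (1:ℝ)) y
        - deriv (fun _ : ℝ => (1:ℝ)) y * 1) = (fun _ : ℝ => (0:ℝ)) := by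
      funext y; ring
    rw [hW, cc_const]
  -- (one, id)
  · rw [E_one_id k s β f g mu lam nu x hf' hg',
      E_any_one k s β f g mu x (fun x => x) (Lop lam (fun x => x) f) (Lop nu (fun x => x) g)]
    have hW : (fun y : ℝ => 1 * deriv (fun x : ℝ => x) y
        - deriv (fun _ : ℝ => (1:ℝ)) y * y) = (fun _ : ℝ => (1:ℝ)) := by
      funext y; simp
    rw [hW, cc_const]
    norm_num
  -- (one, sq)
  · rw [E_one_sq k s β f g mu lam nu x hf' hg',
      E_any_one k s β f g mu x (fun x => x ^ 2) (Lop lam (fun x => x ^ 2) f)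
        (Lop nu (fun x => x ^ 2) g)]
    have hW : (fun y : ℝ => 1 * deriv (fun x : ℝ => x ^ 2) y
        - deriv (fun _ : ℝ => (1:ℝ)) y * y ^ 2) = (fun y : ℝ => (2:ℝ) * y) := by
      funext y; simp
    rw [hW, cc_linear, sub_zero]
  -- (id, one)
  · rw [E_one_id k s β f g mu lam nu x hf' hg',
      E_any_one k s β f g mu x (fun x => x) (Lop lam (fun x => x) f) (Lop nu (fun x => x) g)]
    have hW : (fun y : ℝ => y * deriv (fun _ : ℝ => (1:ℝ)) y
        - deriv (fun x : ℝ => x) y * 1) = (fun _ : ℝ => (-1:ℝ)) := by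
      funext y; simp
    rw [hW, cc_const]
    norm_num
  -- (id, id)
  · rw [sub_self]
    have hW : (fun y : ℝ => y * deriv (fun x : ℝ => x) y
        - deriv (fun x : ℝ => x) y * y) = (fun _ : ℝ => (0:ℝ)) := by
      funext y; ring
    rw [hW, cc_const]
  -- (id, sq)
  · rw [E_id_sq k s β f g hf' hg' lam nu mu hmu hs x,
      E_sq_id k s t β f g hf' hg' lam nu mu hlam hnu hmu hs ht hst hβ x]
    have hW : (fun y : ℝ => y * deriv (fun x : ℝ => x ^ 2) y
        - deriv (fun x : ℝ => x) y * y ^ 2) = (fun y : ℝ => y ^ 2) := by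
      funext y; simp; ring
    rw [hW, cc_sq, sub_zero]
  -- (sq, one)
  · rw [E_one_sq k s β f g mu lam nu x hf' hg',
      E_any_one k s β f g mu x (fun x => x ^ 2) (Lop lam (fun x => x ^ 2) f)
        (Lop nu (fun x => x ^ 2) g)]
    have hW : (fun y : ℝ => y ^ 2 * deriv (fun _ : ℝ => (1:ℝ)) y
        - deriv (fun x : ℝ => x ^ 2) y * 1) = (fun y : ℝ => (-2:ℝ) * y) := by
      funext y; simp
    rw [hW, cc_linear, zero_sub, ← Finset.sum_neg_distrib]
    beta_reduce
    apply Finset.sum_congr rfl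
    intro i _
    ring
  -- (sq, id)
  · rw [E_id_sq k s β f g hf' hg' lam nu mu hmu hs x,
      E_sq_id k s t β f g hf' hg' lam nu mu hlam hnu hmu hs ht hst hβ x]
    have hW : (fun y : ℝ => y ^ 2 * deriv (fun x : ℝ => x) y
        - deriv (fun x : ℝ => x ^ 2) y * y) = (fun y : ℝ => (-1:ℝ) * y ^ 2) := by
      funext y; simp; ring
    rw [hW, cc_csq, zero_sub, ← Finset.sum_neg_distrib]
    beta_reduce
    apply Finset.sum_congr rfl
    intro i _
    ring
  -- (sq, sq)
  · rw [sub_self]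
    have hW : (fun y : ℝ => y ^ 2 * deriv (fun x : ℝ => x ^ 2) y
        - deriv (fun x : ℝ => x ^ 2) y * y ^ 2) = (fun _ : ℝ => (0:ℝ)) := by
      funext y; ring
    rw [hW, cc_const]
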